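/- Let p be an odd prime and let q be an element of the finite field F_p that is not a square. Then every Lie algebra g^7_{a0cd} over F_p with a ≠ 0, 4ad ≠ 5c², and 4ad − 5c² not a square in F_p is isomorphic to g^7_{100q}. -/

import Mathlib

/-!
Take the basis of `g^7_{a0cd}` given by `f_1 = 2a²t e_1 - tc e_7`, `f_7 = 4a³t² e_7` and
`f_i = ⁅f_1, f_{i+1}⁆` for `2 ≤ i ≤ 6`. It is triangular with nonzero diagonal, and its structure
constants are those of `g^7_{100q}` exactly when `16a⁶qt² = 4ad - 5c²`. Such a `t` exists because
the product of the two non-squares `4ad - 5c²` and `q` of `F_p` is a nonzero square.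
-/

variable (K : Type*) [Field K]

/-- The bracket of the Lie algebra `g^7_{abcd}` on `K^7` (indices `0..6` correspond to
`e_1..e_7`): the only nonzero brackets among basis vectors are `⁅e_1, e_{i+1}⁆ = e_i` for
`2 ≤ i ≤ 6`, `⁅e_4, e_7⁆ = a e_2`, `⁅e_5, e_6⁆ = b e_2`, `⁅e_5, e_7⁆ = c e_2 + (a+b) e_3`
and `⁅e_6, e_7⁆ = d e_2 + c e_3 + (a+b) e_4`. -/
def g7b (a b c d : K) (x y : Fin 7 → K) : Fin 7 → K :=
  ![0,
    x 0 * y 2 - x 2 * y 0 + a * (x 3 * y 6 - x 6 * y 3) + b * (x 4 * y 5 - x 5 * y 4)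
      + c * (x 4 * y 6 - x 6 * y 4) + d * (x 5 * y 6 - x 6 * y 5),
    x 0 * y 3 - x 3 * y 0 + (a + b) * (x 4 * y 6 - x 6 * y 4) + c * (x 5 * y 6 - x 6 * y 5),
    x 0 * y 4 - x 4 * y 0 + (a + b) * (x 5 * y 6 - x 6 * y 5),
    x 0 * y 5 - x 5 * y 0,
    x 0 * y 6 - x 6 * y 0,
    0]

/-- The Lie algebras `g^7_{abcd}` and `g^7_{ABCD}` are isomorphic: there is a bijective
linear map preserving the brackets. -/
def g7Iso (a b c d A B C D : K) : Prop :=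
  ∃ f : (Fin 7 → K) ≃ₗ[K] (Fin 7 → K),
    ∀ x y, f (g7b K a b c d x y) = g7b K A B C D (f x) (f y)

theorem isSquare_mul_of_not_isSquare {F : Type*} [Field F] [Fintype F]
    {x y : F} (hx : ¬IsSquare x) (hy : ¬IsSquare y) : IsSquare (x * y) := by
  classical
  have hx0 : x ≠ 0 := fun h => hx (h ▸ IsSquare.zero)
  have hy0 : y ≠ 0 := fun h => hy (h ▸ IsSquare.zero)
  rw [← quadraticChar_one_iff_isSquare (mul_ne_zero hx0 hy0), map_mul,
    quadraticChar_neg_one_iff_not_isSquare.mpr hx, quadraticChar_neg_one_iff_not_isSquare.mpr hy]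
  norm_num

variable {K}

theorem four_ne_zero_of_two_ne_zero {R : Type*} [Semiring R] [NoZeroDivisors R]
    (h2 : (2 : R) ≠ 0) : (4 : R) ≠ 0 := by
  simpa [← two_add_two_eq_four, ← two_mul] using mul_ne_zero h2 h2

theorem g7Iso.symm {a b c d A B C D : K} (h : g7Iso K a b c d A B C D) :
    g7Iso K A B C D a b c d := by
  obtain ⟨f, hf⟩ := h
  exact ⟨f.symm, fun x y => f.injective (by simp [hf])⟩

def g7Change (a c q t : K) : (Fin 7 → K) →ₗ[K] (Fin 7 → K) where
  toFun u := ![2*a^2*t*u 0,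
    128*a^13*t^7*u 1 + 96*a^10*t^6*c*u 2 + 40*a^7*t^5*c^2*u 3
      + (10*a^4*t^4*c^3 + 32*a^10*t^6*c*q)*u 4,
    64*a^11*t^6*u 2 + 32*a^8*t^5*c*u 3 + 8*a^5*t^4*c^2*u 4,
    32*a^9*t^5*u 3 + 8*a^6*t^4*c*u 4,
    16*a^7*t^4*u 4,
    8*a^5*t^3*u 5,
    -(t*c*u 0) + 4*a^3*t^2*u 6]
  map_add' x y := by
    funext i
    fin_cases i <;> simp only [Pi.add_apply, Fin.isValue, Fin.reduceFinMk, Fin.zero_eta,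
      Fin.mk_one, Matrix.cons_val_zero, Matrix.cons_val_one, Matrix.cons_val] <;> ring
  map_smul' m x := by
    funext i
    fin_cases i <;> simp only [Pi.smul_apply, smul_eq_mul, RingHom.id_apply, Fin.isValue,
      Fin.reduceFinMk, Fin.zero_eta, Fin.mk_one, Matrix.cons_val_zero, Matrix.cons_val_one,
      Matrix.cons_val] <;> ring

theorem g7Change_injective {a c q t : K} (h2 : (2 : K) ≠ 0) (ha : a ≠ 0) (ht : t ≠ 0) :
    Function.Injective (g7Change a c q t) := by
  rw [← LinearMap.ker_eq_bot, LinearMap.ker_eq_bot']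
  intro u hu
  have e : ∀ i, g7Change a c q t u i = 0 := fun i => congrFun hu i
  have e0 := e 0; have e1 := e 1; have e2 := e 2; have e3 := e 3
  have e4 := e 4; have e5 := e 5; have e6 := e 6
  simp only [g7Change, LinearMap.coe_mk, AddHom.coe_mk, Fin.isValue, Matrix.cons_val_zero,
    Matrix.cons_val_one, Matrix.cons_val] at e0 e1 e2 e3 e4 e5 e6
  have h4 := four_ne_zero_of_two_ne_zero h2
  have hα : 2 * a ^ 2 * t ≠ 0 := by simp [*]
  have hγ : 4 * a ^ 3 * t ^ 2 ≠ 0 := by simp [*]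
  have u0 : u 0 = 0 := by
    simpa [hα] using (show (2 * a ^ 2 * t) * u 0 = 0 by linear_combination e0)
  have u4 : u 4 = 0 := by
    simpa [hα, hγ] using (show (2 * a ^ 2 * t) ^ 2 * (4 * a ^ 3 * t ^ 2) * u 4 = 0 by
      linear_combination e4)
  have u5 : u 5 = 0 := by
    simpa [hα, hγ] using (show (2 * a ^ 2 * t) * (4 * a ^ 3 * t ^ 2) * u 5 = 0 by
      linear_combination e5)
  have u3 : u 3 = 0 := by
    simpa [hα, hγ] using (show (2 * a ^ 2 * t) ^ 3 * (4 * a ^ 3 * t ^ 2) * u 3 = 0 by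
      linear_combination e3 - 8*a^6*t^4*c * u4)
  have u2 : u 2 = 0 := by
    simpa [hα, hγ] using (show (2 * a ^ 2 * t) ^ 4 * (4 * a ^ 3 * t ^ 2) * u 2 = 0 by
      linear_combination e2 - 32*a^8*t^5*c * u3 - 8*a^5*t^4*c^2 * u4)
  have u1 : u 1 = 0 := by
    simpa [hα, hγ] using (show (2 * a ^ 2 * t) ^ 5 * (4 * a ^ 3 * t ^ 2) * u 1 = 0 by
      linear_combination e1 - 96*a^10*t^6*c * u2 - 40*a^7*t^5*c^2 * u3
        - (10*a^4*t^4*c^3 + 32*a^10*t^6*c*q) * u4)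
  have u6 : u 6 = 0 := by
    simpa [hγ] using (show (4 * a ^ 3 * t ^ 2) * u 6 = 0 by linear_combination e6 + t * c * u0)
  funext i
  fin_cases i <;> assumption

theorem g7Change_bracket {a c d q t : K} (hrel : 16*a^6*q*t^2 = 4*a*d - 5*c^2)
    (u v : Fin 7 → K) :
    g7Change a c q t (g7b K 1 0 0 q u v)
      = g7b K a 0 c d (g7Change a c q t u) (g7Change a c q t v) := by
  funext i
  fin_cases i <;> simp only [g7Change, g7b, LinearMap.coe_mk, AddHom.coe_mk, Fin.isValue,
    Fin.reduceFinMk, Fin.zero_eta, Fin.mk_one, Matrix.cons_val_zero, Matrix.cons_val_one,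
    Matrix.cons_val]
  · ring
  · linear_combination (2*a^4*t^4*c*(u 0 * v 5 - u 5 * v 0)
      + 8*a^7*t^5*(u 5 * v 6 - u 6 * v 5)) * hrel
  all_goals ring

theorem g7Iso_of_eq {a c d q t : K} (h2 : (2 : K) ≠ 0) (ha : a ≠ 0) (ht : t ≠ 0)
    (hrel : 16*a^6*q*t^2 = 4*a*d - 5*c^2) : g7Iso K 1 0 0 q a 0 c d :=
  ⟨.ofInjectiveEndo _ (g7Change_injective h2 ha ht), g7Change_bracket hrel⟩

theorem stmt16_general (p : ℕ) [Fact p.Prime] (hp : p ≠ 2) (q : ZMod p) (hq : ¬ IsSquare q)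
    (a c d : ZMod p) (ha : a ≠ 0)
    (hns : ¬ IsSquare (4 * a * d - 5 * c ^ 2)) :
    g7Iso (ZMod p) a 0 c d 1 0 0 q := by
  have h2 : (2 : ZMod p) ≠ 0 := Ring.two_ne_zero (by rwa [ZMod.ringChar_zmod_n])
  have hq0 : q ≠ 0 := fun h => hq (h ▸ IsSquare.zero)
  have hX0 : 4 * a * d - 5 * c ^ 2 ≠ 0 := fun h => hns (h ▸ IsSquare.zero)
  obtain ⟨s, hs⟩ := isSquare_mul_of_not_isSquare hns hq
  have hs0 : s ≠ 0 := by
    rintro rfl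
    exact mul_ne_zero hX0 hq0 (by simpa using hs)
  have h4 : 4 * a ^ 3 * q ≠ 0 := by simp [four_ne_zero_of_two_ne_zero h2, *]
  refine (g7Iso_of_eq (t := s / (4 * a ^ 3 * q)) h2 ha (div_ne_zero hs0 h4) ?_).symm
  rw [div_pow, mul_div_assoc', div_eq_iff (pow_ne_zero 2 h4)]
  linear_combination (-(16*a^6*q)) * hs

/-- Over `F_p` with `p` an odd prime and `q` a non-square: every `g^7_{a0cd}` with `a ≠ 0`,
`4ad ≠ 5c²` and `4ad - 5c²` not a square is isomorphic to `g^7_{100q}`. -/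
theorem stmt16 (p : ℕ) [Fact p.Prime] (hp : p ≠ 2) (q : ZMod p) (hq : ¬ IsSquare q)
    (a c d : ZMod p) (ha : a ≠ 0) (h4 : 4 * a * d ≠ 5 * c ^ 2)
    (hns : ¬ IsSquare (4 * a * d - 5 * c ^ 2)) :
    g7Iso (ZMod p) a 0 c d 1 0 0 q :=
  stmt16_general p hp q hq a c d ha hns
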